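/- arXiv:1303.2814 — 3 statements merged into one kernel-verified Lean document; each statement's English description precedes it below -/
import Mathlib

section
/- Canonical path bound: for a reversible irreducible transition matrix P on a finite state space with stationary distribution μ, fix for every ordered pair (x,y) a simple path γ_{x,y} in the transition graph of P. Then Gap(P) ≥ ρ^{-1}, where ρ = max over edges (z,v) with P(z,v) > 0 of (1/(μ(z)P(z,v))) Σ_{γ_{x,y} ∋ (z,v)} μ(x) μ(y) len(γ_{x,y}). -/
open Finset

variable {X : Type*}

/-- A (row-)stochastic transition matrix. -/
def IsStochastic [Fintype X] (P : X → X → ℝ) : Prop :=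
  (∀ x y, 0 ≤ P x y) ∧ ∀ x, ∑ y, P x y = 1

/-- A strictly positive probability distribution on a finite set. -/
def IsProbDist [Fintype X] (π : X → ℝ) : Prop :=
  (∀ x, 0 < π x) ∧ ∑ x, π x = 1

/-- Reversibility (detailed balance) of `P` with respect to `π`. -/
def IsReversible [Fintype X] (π : X → ℝ) (P : X → X → ℝ) : Prop :=
  ∀ x y, π x * P x y = π y * P y x

/-- Nonnegative definiteness of `P` as a self-adjoint operator on `L²(π)`. -/
def IsNonnegDef [Fintype X] (π : X → ℝ) (P : X → X → ℝ) : Prop :=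
  ∀ f : X → ℝ, 0 ≤ ∑ x, ∑ y, π x * f x * P x y * f y

noncomputable def distMean [Fintype X] (π f : X → ℝ) : ℝ := ∑ x, π x * f x

noncomputable def distVar [Fintype X] (π f : X → ℝ) : ℝ :=
  ∑ x, π x * (f x - distMean π f) ^ 2

noncomputable def dirichletForm [Fintype X] (π : X → ℝ) (P : X → X → ℝ) (f : X → ℝ) : ℝ :=
  (1 / 2) * ∑ x, ∑ y, π x * P x y * (f x - f y) ^ 2

/-- Spectral gap of a reversible chain, via the variational characterization
`Gap(P) = inf { E(f,f) / Var_π(f) : Var_π(f) ≠ 0 }`, which equals `1 - λ₂`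
(one minus the second-largest eigenvalue) for reversible chains. -/
noncomputable def spectralGap [Fintype X] (π : X → ℝ) (P : X → X → ℝ) : ℝ :=
  sInf {r | ∃ f : X → ℝ, distVar π f ≠ 0 ∧ r = dirichletForm π P f / distVar π f}

def MCIrreducible [Fintype X] [DecidableEq X] (P : Matrix X X ℝ) : Prop :=
  ∀ x y : X, ∃ n : ℕ, 0 < (P ^ n) x y

/-- Aperiodicity: for every state, the gcd of its return times is 1. -/
def IsAperiodic [Fintype X] [DecidableEq X] (P : Matrix X X ℝ) : Prop :=
  ∀ x : X, ∀ d : ℕ, (∀ n : ℕ, 0 < n → 0 < (P ^ n) x x → d ∣ n) → d = 1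

/-- Total variation distance between the `n`-step distribution started at `x`
and `π`. -/
noncomputable def tvDist [Fintype X] [DecidableEq X] (π : X → ℝ) (P : Matrix X X ℝ)
    (n : ℕ) (x : X) : ℝ :=
  ⨆ D : Finset X, |(∑ y ∈ D, (P ^ n) x y) - ∑ y ∈ D, π y|

/-- Mixing time: least `n` such that from every initial state, all later
times are within total variation `ε` of `π`. -/
noncomputable def mixingTime [Fintype X] [DecidableEq X] (π : X → ℝ) (P : Matrix X X ℝ)
    (ε : ℝ) : ℕ :=
  sInf {n | ∀ x : X, ∀ m, n ≤ m → tvDist π P m x ≤ ε}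

/-- The list of directed edges traversed by a path given as a list of
vertices. -/
def pathEdges (l : List X) : List (X × X) := l.zip l.tail

/-!
Telescoping `f x - f y` along `γ x y` and applying Cauchy–Schwarz gives
`(f x - f y)² ≤ len(γ x y) · ∑_{(z,v) ∈ γ x y} (f z - f v)²`. Since
`Var_μ f = ½ ∑_{x,y} μ(x) μ(y) (f x - f y)²`, summing these bounds and exchanging the order of
summation charges each edge `(z,v)` with its load, which is at most `ρ μ(z) P(z,v)`. This is the
Poincaré inequality `Var_μ f ≤ ρ 𝓔(f)`, i.e. `Gap(P) ≥ ρ⁻¹`. Simplicity of the paths is used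
twice: edges are not repeated (so the Cauchy–Schwarz sum is over a set) and are not loops (so
`ρ > 0` forces a second state, hence a non-constant `f`).
-/

theorem pathEdges_cons_cons (a b : X) (l : List X) :
    pathEdges (a :: b :: l) = (a, b) :: pathEdges (b :: l) := rfl

theorem sum_map_pathEdges_sub {G : Type*} [AddCommGroup G] (f : X → G) :
    ∀ {l : List X} {x y : X}, l.head? = some x → l.getLast? = some y →
      ((pathEdges l).map fun e => f e.1 - f e.2).sum = f x - f y
  | [], _, _, hx, _ => by simp at hx
  | [a], _, _, hx, hy => by simp_all [pathEdges]
  | a :: b :: l, _, _, hx, hy => by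
      obtain rfl : a = _ := Option.some_inj.1 hx
      rw [List.getLast?_cons_cons] at hy
      rw [pathEdges_cons_cons, List.map_cons, List.sum_cons, sum_map_pathEdges_sub f rfl hy]
      abel

theorem nodup_pathEdges {l : List X} (h : l.Nodup) : (pathEdges l).Nodup := by
  have hsnd : (pathEdges l).map Prod.snd = l.tail := List.map_snd_zip (by simp)
  exact (hsnd ▸ h.tail : ((pathEdges l).map Prod.snd).Nodup).of_map _

theorem ne_of_mem_pathEdges : ∀ {l : List X} {z v : X}, l.Nodup → (z, v) ∈ pathEdges l → z ≠ v
  | [], _, _, _, h => by simp [pathEdges] at h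
  | [_], _, _, _, h => by simp [pathEdges] at h
  | a :: b :: l, z, v, hl, h => by
      rw [pathEdges_cons_cons, List.mem_cons, Prod.mk.injEq] at h
      rcases h with ⟨rfl, rfl⟩ | h
      · exact fun hab => (List.nodup_cons.1 hl).1 (hab ▸ List.mem_cons_self)
      · exact ne_of_mem_pathEdges hl.of_cons h

theorem sq_sub_le_length_mul_sum_pathEdges [Fintype X] [DecidableEq X] (f : X → ℝ)
    {l : List X} {x y : X} (hl : l.Nodup) (hx : l.head? = some x) (hy : l.getLast? = some y) :
    (f x - f y) ^ 2 ≤ (pathEdges l).length *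
      ∑ e : X × X, if e ∈ pathEdges l then (f e.1 - f e.2) ^ 2 else 0 := by
  have hE := nodup_pathEdges hl
  simp only [← List.mem_toFinset (l := pathEdges l)]
  rw [← sum_map_pathEdges_sub f hx hy, ← List.sum_toFinset _ hE, ← List.toFinset_card_of_nodup hE,
    Finset.sum_ite_mem, Finset.univ_inter]
  exact sq_sum_le_card_mul_sum_sq

section Variance

variable [Fintype X] {π : X → ℝ}

theorem distVar_nonneg (hπ : ∀ x, 0 ≤ π x) (f : X → ℝ) : 0 ≤ distVar π f :=
  Finset.sum_nonneg fun x _ => mul_nonneg (hπ x) (sq_nonneg _)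

theorem dirichletForm_nonneg {P : X → X → ℝ} (hπ : ∀ x, 0 ≤ π x) (hP : ∀ x y, 0 ≤ P x y)
    (f : X → ℝ) : 0 ≤ dirichletForm π P f :=
  mul_nonneg (by norm_num) <| Finset.sum_nonneg fun x _ => Finset.sum_nonneg fun y _ =>
    mul_nonneg (mul_nonneg (hπ x) (hP x y)) (sq_nonneg _)

theorem spectralGap_nonneg {P : X → X → ℝ} (hπ : ∀ x, 0 ≤ π x) (hP : ∀ x y, 0 ≤ P x y) :
    0 ≤ spectralGap π P :=
  Real.sInf_nonneg <| by
    rintro r ⟨f, -, rfl⟩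
    exact div_nonneg (dirichletForm_nonneg hπ hP f) (distVar_nonneg hπ f)

theorem distVar_eq_half_sum_sq_sub (hπ : ∑ x, π x = 1) (f : X → ℝ) :
    distVar π f = 1 / 2 * ∑ x, ∑ y, π x * π y * (f x - f y) ^ 2 := by
  have hvar : ∀ a, π a * (f a - distMean π f) ^ 2 =
      π a * f a ^ 2 - 2 * distMean π f * (π a * f a) + distMean π f ^ 2 * π a :=
    fun a => by ring
  have hpair : ∀ a b, π a * π b * (f a - f b) ^ 2 =
      π a * f a ^ 2 * π b - 2 * (π a * f a) * (π b * f b) + π a * (π b * f b ^ 2) :=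
    fun a b => by ring
  simp only [distVar, hvar, hpair, Finset.sum_add_distrib, Finset.sum_sub_distrib,
    ← Finset.sum_mul, ← Finset.mul_sum, hπ]
  rw [distMean]
  ring

theorem exists_distVar_ne_zero (hπ : ∀ x, 0 < π x) {z v : X} (hzv : z ≠ v) :
    ∃ f, distVar π f ≠ 0 := by
  classical
  set g : X → ℝ := fun x => if x = z then 1 else 0
  refine ⟨g, fun h => ?_⟩
  have hconst : ∀ x, g x = distMean π g := fun x => by
    have := (Finset.sum_eq_zero_iff_of_nonneg fun x _ =>
      mul_nonneg (hπ x).le (sq_nonneg _)).1 h x (Finset.mem_univ x)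
    simpa [sub_eq_zero, (hπ x).ne'] using this
  simpa [g, hzv.symm] using (hconst z).trans (hconst v).symm

theorem inv_le_spectralGap_of_poincare {P : X → X → ℝ} {ρ : ℝ} (hπ : ∀ x, 0 ≤ π x)
    (hvar : ∃ f, distVar π f ≠ 0) (hρ : 0 < ρ)
    (hpoinc : ∀ f, distVar π f ≤ ρ * dirichletForm π P f) : ρ⁻¹ ≤ spectralGap π P := by
  obtain ⟨f, hf⟩ := hvar
  refine le_csInf ⟨_, f, hf, rfl⟩ ?_
  rintro r ⟨g, hg, rfl⟩
  rw [le_div_iff₀ ((distVar_nonneg hπ g).lt_of_ne' hg), mul_comm, ← div_eq_mul_inv,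
    div_le_iff₀ hρ, mul_comm]
  exact hpoinc g

end Variance

section CanonicalPaths

variable [Fintype X] [DecidableEq X] {μ : X → ℝ} {P : X → X → ℝ} {γ : X → X → List X}

def edgeLoad (μ : X → ℝ) (γ : X → X → List X) (z v : X) : ℝ :=
  ∑ x, ∑ y, if (z, v) ∈ pathEdges (γ x y) then
    μ x * μ y * ((pathEdges (γ x y)).length : ℝ) else 0

/-- The constant `ρ` of the canonical path bound (`sSup ∅ = 0` if `P` has no positive entry). -/
noncomputable def congestion (μ : X → ℝ) (P : X → X → ℝ) (γ : X → X → List X) : ℝ :=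
  sSup {r | ∃ z v, 0 < P z v ∧ r = (1 / (μ z * P z v)) * edgeLoad μ γ z v}

theorem edgeLoad_nonneg (hμ : ∀ x, 0 ≤ μ x) (z v : X) : 0 ≤ edgeLoad μ γ z v :=
  Finset.sum_nonneg fun x _ => Finset.sum_nonneg fun y _ => by
    split_ifs
    exacts [by have := hμ x; have := hμ y; positivity, le_rfl]

theorem edgeLoad_eq_zero_of_not_mem {z v : X} (h : ∀ x y, (z, v) ∉ pathEdges (γ x y)) :
    edgeLoad μ γ z v = 0 :=
  Finset.sum_eq_zero fun x _ => Finset.sum_eq_zero fun y _ => if_neg (h x y)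

theorem congestion_nonneg (hμ : ∀ x, 0 ≤ μ x) : 0 ≤ congestion μ P γ :=
  Real.sSup_nonneg <| by
    rintro r ⟨z, v, hzv, rfl⟩
    have := hμ z
    have := edgeLoad_nonneg (γ := γ) hμ z v
    positivity

theorem edgeLoad_le_congestion_mul (hμ : ∀ x, 0 < μ x) {z v : X} (hzv : 0 < P z v) :
    edgeLoad μ γ z v ≤ congestion μ P γ * (μ z * P z v) := by
  have hbdd : BddAbove {r | ∃ z v, 0 < P z v ∧ r = (1 / (μ z * P z v)) * edgeLoad μ γ z v} :=
    ((Set.finite_range fun e : X × X => 1 / (μ e.1 * P e.1 e.2) * edgeLoad μ γ e.1 e.2).subset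
      (by rintro r ⟨z, v, -, rfl⟩; exact ⟨(z, v), rfl⟩)).bddAbove
  rw [← div_le_iff₀ (mul_pos (hμ z) hzv), div_eq_inv_mul, ← one_div]
  exact le_csSup hbdd ⟨z, v, hzv, rfl⟩

theorem exists_ne_of_congestion_pos (hnodup : ∀ x y, (γ x y).Nodup)
    (h : 0 < congestion μ P γ) : ∃ z v : X, z ≠ v := by
  by_contra! hX
  refine h.not_ge (Real.sSup_nonpos ?_)
  rintro r ⟨z, v, -, rfl⟩
  rw [edgeLoad_eq_zero_of_not_mem fun x y hzv => ne_of_mem_pathEdges (hnodup x y) hzv (hX z v),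
    mul_zero]

theorem distVar_le_congestion_mul_dirichletForm (hμ : IsProbDist μ) (hP : ∀ x y, 0 ≤ P x y)
    (hstart : ∀ x y, (γ x y).head? = some x) (hend : ∀ x y, (γ x y).getLast? = some y)
    (hnodup : ∀ x y, (γ x y).Nodup) (hpos : ∀ x y, ∀ e ∈ pathEdges (γ x y), 0 < P e.1 e.2)
    (f : X → ℝ) : distVar μ f ≤ congestion μ P γ * dirichletForm μ P f := by
  set ρ := congestion μ P γ
  have hpath : ∀ x y, μ x * μ y * (f x - f y) ^ 2 ≤ ∑ e : X × X,
      if e ∈ pathEdges (γ x y) then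
        μ x * μ y * (pathEdges (γ x y)).length * (f e.1 - f e.2) ^ 2 else 0 := by
    intro x y
    have hμxy : 0 ≤ μ x * μ y := mul_nonneg (hμ.1 x).le (hμ.1 y).le
    calc μ x * μ y * (f x - f y) ^ 2
        ≤ μ x * μ y * ((pathEdges (γ x y)).length *
          ∑ e : X × X, if e ∈ pathEdges (γ x y) then (f e.1 - f e.2) ^ 2 else 0) :=
          mul_le_mul_of_nonneg_left
            (sq_sub_le_length_mul_sum_pathEdges f (hnodup x y) (hstart x y) (hend x y)) hμxy
      _ = _ := by simp only [Finset.mul_sum, mul_ite, mul_zero, mul_assoc]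
  have hedge : ∀ e : X × X, (f e.1 - f e.2) ^ 2 * edgeLoad μ γ e.1 e.2 ≤
      ρ * (μ e.1 * P e.1 e.2 * (f e.1 - f e.2) ^ 2) := by
    rintro ⟨z, v⟩
    by_cases hzv : 0 < P z v
    · calc (f z - f v) ^ 2 * edgeLoad μ γ z v ≤ (f z - f v) ^ 2 * (ρ * (μ z * P z v)) :=
            mul_le_mul_of_nonneg_left (edgeLoad_le_congestion_mul hμ.1 hzv) (sq_nonneg _)
        _ = ρ * (μ z * P z v * (f z - f v) ^ 2) := by ring
    · rw [edgeLoad_eq_zero_of_not_mem fun x y he => hzv (hpos x y _ he), mul_zero]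
      have := congestion_nonneg (P := P) (γ := γ) fun x => (hμ.1 x).le
      have := (hμ.1 z).le
      have := hP z v
      positivity
  calc distVar μ f = 1 / 2 * ∑ x, ∑ y, μ x * μ y * (f x - f y) ^ 2 :=
        distVar_eq_half_sum_sq_sub hμ.2 f
    _ ≤ 1 / 2 * ∑ x, ∑ y, ∑ e : X × X, if e ∈ pathEdges (γ x y) then
          μ x * μ y * (pathEdges (γ x y)).length * (f e.1 - f e.2) ^ 2 else 0 := by
        gcongr with x _ y _
        exact hpath x y
    _ = 1 / 2 * ∑ e : X × X, (f e.1 - f e.2) ^ 2 * edgeLoad μ γ e.1 e.2 := by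
        rw [← Fintype.sum_prod_type', Finset.sum_comm]
        simp only [edgeLoad, Finset.mul_sum, ← Fintype.sum_prod_type', Prod.mk.eta]
        exact Finset.sum_congr rfl fun _ _ => by split_ifs <;> ring
    _ ≤ 1 / 2 * ∑ e : X × X, ρ * (μ e.1 * P e.1 e.2 * (f e.1 - f e.2) ^ 2) := by
        gcongr 1 / 2 * ?_
        exact Finset.sum_le_sum fun e _ => hedge e
    _ = ρ * dirichletForm μ P f := by
        rw [dirichletForm, ← Finset.mul_sum,
          Fintype.sum_prod_type' fun z v => μ z * P z v * (f z - f v) ^ 2]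
        ring

end CanonicalPaths

theorem gap_ge_inv_path_constant_general [Fintype X] [DecidableEq X]
    (μ : X → ℝ) (P : Matrix X X ℝ)
    (hμ : IsProbDist μ) (hP : IsStochastic (fun x y => P x y))
    (γ : X → X → List X)
    (hstart : ∀ x y, (γ x y).head? = some x)
    (hend : ∀ x y, (γ x y).getLast? = some y)
    (hnodup : ∀ x y, (γ x y).Nodup)
    (hpos : ∀ x y, ∀ e ∈ pathEdges (γ x y), 0 < P e.1 e.2) :
    (sSup {r | ∃ z v, 0 < P z v ∧
        r = (1 / (μ z * P z v)) *
          ∑ x, ∑ y, (if (z, v) ∈ pathEdges (γ x y) then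
            μ x * μ y * ((pathEdges (γ x y)).length : ℝ) else 0)})⁻¹ ≤
      spectralGap μ (fun x y => P x y) := by
  change (congestion μ P γ)⁻¹ ≤ spectralGap μ P
  rcases le_or_gt (congestion μ P γ) 0 with hρ | hρ
  · exact (inv_nonpos.2 hρ).trans (spectralGap_nonneg (fun x => (hμ.1 x).le) hP.1)
  · obtain ⟨z, v, hzv⟩ := exists_ne_of_congestion_pos hnodup hρ
    exact inv_le_spectralGap_of_poincare (fun x => (hμ.1 x).le)
      (exists_distVar_ne_zero hμ.1 hzv) hρ
      (distVar_le_congestion_mul_dirichletForm hμ hP.1 hstart hend hnodup hpos)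

/-- Canonical path (Poincaré) bound: if for every ordered
pair `(x,y)` a simple path `γ x y` in the transition graph of `P` is fixed,
then `Gap(P) ≥ ρ⁻¹` where
`ρ = max_{(z,v) : P(z,v)>0} (μ(z)P(z,v))⁻¹ ∑_{γ_{x,y} ∋ (z,v)} μ(x)μ(y) len(γ_{x,y})`. -/
theorem gap_ge_inv_path_constant [Fintype X] [DecidableEq X]
    (μ : X → ℝ) (P : Matrix X X ℝ)
    (hμ : IsProbDist μ) (hP : IsStochastic (fun x y => P x y))
    (hrev : IsReversible μ (fun x y => P x y)) (hirr : MCIrreducible P)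
    (γ : X → X → List X)
    (hstart : ∀ x y, (γ x y).head? = some x)
    (hend : ∀ x y, (γ x y).getLast? = some y)
    (hnodup : ∀ x y, (γ x y).Nodup)
    (hpos : ∀ x y, ∀ e ∈ pathEdges (γ x y), 0 < P e.1 e.2) :
    (sSup {r | ∃ z v, 0 < P z v ∧
        r = (1 / (μ z * P z v)) *
          ∑ x, ∑ y, (if (z, v) ∈ pathEdges (γ x y) then
            μ x * μ y * ((pathEdges (γ x y)).length : ℝ) else 0)})⁻¹ ≤
      spectralGap μ (fun x y => P x y) :=
  gap_ge_inv_path_constant_general μ P hμ hP γ hstart hend hnodup hpos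
end

section
/- The exclusion process with c particles on the complete graph on n vertices has spectral gap at least 1/c: i.e., the Markov chain on {z ∈ {0,1}^n : Σ_i z_i = c} (with 1 ≤ c ≤ n−1) that picks a uniformly random index j among {i : z_i = 1} and a uniformly random index ℓ ∈ {1,…,n}, swapping z_j and z_ℓ if z_ℓ = 0 and otherwise staying put, is reversible with respect to the uniform distribution on this set and satisfies Gap ≥ 1/c. -/
open Finset

variable {X : Type*}

/-- State space of the exclusion process: binary configurations on `n` sites
with exactly `c` particles. -/
def ExclState (n c : ℕ) : Type :=
  {z : Fin n → Bool // (Finset.univ.filter (fun i => z i = true)).card = c}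

instance (n c : ℕ) : Fintype (ExclState n c) := by unfold ExclState; infer_instance

instance (n c : ℕ) : DecidableEq (ExclState n c) := by unfold ExclState; infer_instance

/-- The exclusion process on the complete graph: pick a uniformly random
particle `j` (among the `c` occupied sites) and a uniformly random site
`ℓ ∈ {1,…,n}`; if `ℓ` is empty move the particle there, else stay. -/
noncomputable def exclKernel (n c : ℕ) : ExclState n c → ExclState n c → ℝ :=
  fun z z' =>
    if z' = z then (c : ℝ) / n
    else if ∃ j ℓ : Fin n, z.1 j = true ∧ z.1 ℓ = false ∧
        z'.1 = Function.update (Function.update z.1 j false) ℓ true then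
      1 / ((c : ℝ) * n)
    else 0

/-!
Identify a configuration with its set of occupied sites, a `c`-subset of `Fin n`. The kernel is
symmetric, hence reversible for the uniform distribution, and its Dirichlet form is
`1 / (2 N c n)` times the Dirichlet form `∑_S moveEnergy f S` of the Johnson graph `J(n, c)`,
where `N = n.choose c`. So `Gap ≥ 1/c` amounts to the Johnson graph having Laplacian spectral gap
at least `n`.

Let `D = insertSum` send functions on `(k+1)`-sets to functions on `k`-sets and `U = eraseSum` be
its adjoint. On `k`-sets `DU - UD = n - 2k`; this gives `‖U g‖² = ‖D g‖² + (n - 2k - 2) ‖g‖²` for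
`g` on `(k+1)`-sets, and an induction on `k` with Cauchy–Schwarz gives
`‖D f‖² ≤ k (n - k - 1) ‖f‖²` for mean-zero `f` on `(k+1)`-sets. Since
`∑_S moveEnergy f S = 2 ((n - k)(k + 1) ‖f‖² - ‖D f‖²)`, the Johnson graph form is at least
`2 ((n - k)(k + 1) - k (n - k - 1)) ‖f‖² = 2 n ‖f‖²`.
-/

section Poincare
variable [Fintype X] {π : X → ℝ}

theorem eq_distMean_of_distVar_eq_zero (hπ : ∀ x, 0 < π x) {f : X → ℝ} (h : distVar π f = 0)
    (x : X) : f x = distMean π f := by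
  have hx := (sum_eq_zero_iff_of_nonneg fun y _ => mul_nonneg (hπ y).le (sq_nonneg _)).1 h x
    (mem_univ x)
  rw [mul_eq_zero, or_iff_right (hπ x).ne', sq_eq_zero_iff, sub_eq_zero] at hx
  exact hx

theorem le_spectralGap [Nontrivial X] (hπ : ∀ x, 0 < π x) {P : X → X → ℝ} {r : ℝ}
    (h : ∀ f, r * distVar π f ≤ dirichletForm π P f) : r ≤ spectralGap π P := by
  classical
  refine le_csInf ?_ ?_
  · obtain ⟨x, y, hxy⟩ := exists_pair_ne X
    have hvar : distVar π (Pi.single x 1) ≠ 0 := fun h0 => by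
      have hx := eq_distMean_of_distVar_eq_zero hπ h0 x
      have hy := eq_distMean_of_distVar_eq_zero hπ h0 y
      simp [hxy.symm] at hx hy
      linarith
    exact ⟨_, _, hvar, rfl⟩
  · rintro _ ⟨f, hf, rfl⟩
    rw [le_div_iff₀ ((distVar_nonneg (fun x => (hπ x).le) f).lt_of_ne' hf)]
    exact h f

theorem dirichletForm_sub_const (P : X → X → ℝ) (f : X → ℝ) (m : ℝ) :
    dirichletForm π P (fun x => f x - m) = dirichletForm π P f := by
  simp only [dirichletForm, sub_sub_sub_cancel_right]

theorem mul_distVar_le_of_distMean_eq_zero (hπ : ∑ x, π x = 1) {P : X → X → ℝ} {r : ℝ}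
    (h : ∀ g, distMean π g = 0 → r * ∑ x, π x * g x ^ 2 ≤ dirichletForm π P g) (f : X → ℝ) :
    r * distVar π f ≤ dirichletForm π P f := by
  have hmean : distMean π (fun x => f x - distMean π f) = 0 := by
    simp only [distMean, mul_sub, sum_sub_distrib, ← sum_mul, hπ, one_mul, sub_self]
  simpa only [dirichletForm_sub_const, distVar] using h _ hmean

end Poincare

theorem sum_sum_sub_sq {ι : Type*} (s : Finset ι) (a : ι → ℝ) :
    ∑ i ∈ s, ∑ j ∈ s, (a i - a j) ^ 2 = 2 * (#s * ∑ i ∈ s, a i ^ 2 - (∑ i ∈ s, a i) ^ 2) := by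
  simp only [sub_sq, sum_add_distrib, sum_sub_distrib, sum_const, nsmul_eq_mul, ← mul_sum,
    ← sum_mul, mul_assoc, sq (∑ i ∈ s, a i)]
  ring

section Slice

variable {α : Type*} [Fintype α] [DecidableEq α]

def insertSum (f : Finset α → ℝ) (T : Finset α) : ℝ := ∑ i ∈ Tᶜ, f (insert i T)

def eraseSum (g : Finset α → ℝ) (S : Finset α) : ℝ := ∑ i ∈ S, g (S.erase i)

theorem sum_powersetCard_sum_compl_insert (k : ℕ) (F : Finset α → α → ℝ) :
    ∑ T ∈ powersetCard k univ, ∑ i ∈ Tᶜ, F (insert i T) i =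
      ∑ S ∈ powersetCard (k + 1) univ, ∑ i ∈ S, F S i := by
  rw [sum_sigma', sum_sigma']
  refine sum_nbij' (fun p => ⟨insert p.2 p.1, p.2⟩) (fun p => ⟨p.1.erase p.2, p.2⟩)
    ?_ ?_ ?_ ?_ (fun _ _ => rfl)
  · rintro ⟨T, i⟩ h
    simp only [mem_sigma, mem_powersetCard_univ, mem_compl] at h ⊢
    exact ⟨by rw [card_insert_of_notMem h.2, h.1], mem_insert_self _ _⟩
  · rintro ⟨S, i⟩ h
    simp only [mem_sigma, mem_powersetCard_univ, mem_compl] at h ⊢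
    exact ⟨by rw [card_erase_of_mem h.2, h.1, Nat.add_sub_cancel], notMem_erase _ _⟩
  · rintro ⟨T, i⟩ h
    simp only [mem_sigma, mem_compl] at h
    simp [erase_insert h.2]
  · rintro ⟨S, i⟩ h
    simp only [mem_sigma] at h
    simp [insert_erase h.2]

theorem sum_insertSum_mul (k : ℕ) (f g : Finset α → ℝ) :
    ∑ T ∈ powersetCard k univ, insertSum f T * g T =
      ∑ S ∈ powersetCard (k + 1) univ, f S * eraseSum g S := by
  simp only [eraseSum, insertSum, sum_mul, mul_sum]
  rw [← sum_powersetCard_sum_compl_insert]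
  refine sum_congr rfl fun T _ => sum_congr rfl fun i hi => ?_
  rw [erase_insert (mem_compl.1 hi)]

theorem sum_insertSum (k : ℕ) (f : Finset α → ℝ) :
    ∑ T ∈ powersetCard k univ, insertSum f T =
      (k + 1) * ∑ S ∈ powersetCard (k + 1) univ, f S := by
  have h := sum_insertSum_mul k f 1
  simp only [Pi.one_apply, mul_one] at h
  rw [h, mul_sum]
  refine sum_congr rfl fun S hS => ?_
  simp [eraseSum, (mem_powersetCard_univ.1 hS), mul_comm]

theorem insertSum_eraseSum (g : Finset α → ℝ) (T : Finset α) :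
    insertSum (eraseSum g) T = eraseSum (insertSum g) T + ((#Tᶜ : ℝ) - #T) * g T := by
  have hDU : insertSum (eraseSum g) T =
      #Tᶜ * g T + ∑ i ∈ Tᶜ, ∑ j ∈ T, g (insert i (T.erase j)) := by
    simp only [insertSum, eraseSum]
    rw [← nsmul_eq_mul, ← sum_const, ← sum_add_distrib]
    refine sum_congr rfl fun i hi => ?_
    have hi : i ∉ T := mem_compl.1 hi
    rw [sum_insert hi, erase_insert hi]
    congr 1
    refine sum_congr rfl fun j hj => ?_
    rw [erase_insert_of_ne (ne_of_mem_of_not_mem hj hi).symm]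
  have hUD : eraseSum (insertSum g) T =
      #T * g T + ∑ j ∈ T, ∑ i ∈ Tᶜ, g (insert i (T.erase j)) := by
    simp only [insertSum, eraseSum]
    rw [← nsmul_eq_mul, ← sum_const, ← sum_add_distrib]
    refine sum_congr rfl fun j hj => ?_
    rw [compl_erase, sum_insert (notMem_compl.2 hj), insert_erase hj]
  rw [hDU, hUD, sum_comm]
  ring

theorem sum_eraseSum_sq (k : ℕ) (g : Finset α → ℝ) :
    ∑ S ∈ powersetCard (k + 2) univ, eraseSum g S ^ 2 =
      ∑ T ∈ powersetCard k univ, insertSum g T ^ 2 +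
        ((Fintype.card α : ℝ) - 2 * (k + 1)) * ∑ T ∈ powersetCard (k + 1) univ, g T ^ 2 := by
  have hcomm : ∀ T ∈ powersetCard (k + 1) univ, insertSum (eraseSum g) T * g T =
      eraseSum (insertSum g) T * g T + ((Fintype.card α : ℝ) - 2 * (k + 1)) * g T ^ 2 := by
    intro T hT
    have hcard : (#Tᶜ : ℝ) = Fintype.card α - #T := by
      rw [eq_sub_iff_add_eq, ← Nat.cast_add, card_compl_add_card]
    rw [insertSum_eraseSum, hcard, mem_powersetCard_univ.1 hT]
    push_cast
    ring
  calc ∑ S ∈ powersetCard (k + 2) univ, eraseSum g S ^ 2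
      = ∑ T ∈ powersetCard (k + 1) univ, insertSum (eraseSum g) T * g T := by
        rw [sum_insertSum_mul]
        simp only [sq]
    _ = _ := by
        rw [sum_congr rfl hcomm, sum_add_distrib, ← mul_sum]
        simp only [mul_comm (eraseSum _ _)]
        rw [← sum_insertSum_mul]
        simp only [sq]

theorem sum_insertSum_sq_le {k : ℕ} (hk : k + 1 ≤ Fintype.card α) {f : Finset α → ℝ}
    (hf : ∑ S ∈ powersetCard (k + 1) univ, f S = 0) :
    ∑ T ∈ powersetCard k univ, insertSum f T ^ 2 ≤
      k * ((Fintype.card α : ℝ) - (k + 1)) * ∑ S ∈ powersetCard (k + 1) univ, f S ^ 2 := by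
  induction k generalizing f with
  | zero =>
    have h := sum_insertSum 0 f
    rw [powersetCard_zero, sum_singleton, hf, mul_zero] at h
    simp [h]
  | succ k ih =>
    rw [show k + 1 + 1 = k + 2 from rfl] at hf hk ⊢
    push_cast
    set g := insertSum f
    set q := ∑ T ∈ powersetCard (k + 1) univ, g T ^ 2
    set A := ((k : ℝ) + 1) * (Fintype.card α - (k + 2)) * ∑ S ∈ powersetCard (k + 2) univ, f S ^ 2
    have hA : 0 ≤ A := by
      have hk' : (k : ℝ) + 2 ≤ Fintype.card α := by exact_mod_cast hk
      exact mul_nonneg (mul_nonneg (by positivity) (by linarith))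
        (sum_nonneg fun _ _ => sq_nonneg _)
    have hUg : ∑ S ∈ powersetCard (k + 2) univ, eraseSum g S ^ 2 ≤
        (k + 1) * (Fintype.card α - (k + 2)) * q := by
      have hg : ∑ T ∈ powersetCard (k + 1) univ, g T = 0 := by rw [sum_insertSum, hf, mul_zero]
      rw [sum_eraseSum_sq]
      nlinarith [ih (by omega) hg]
    have hCS : q ^ 2 ≤ A * q :=
      calc q ^ 2 = (∑ S ∈ powersetCard (k + 2) univ, f S * eraseSum g S) ^ 2 := by
            rw [← sum_insertSum_mul]
            simp only [q, g, sq]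
        _ ≤ (∑ S ∈ powersetCard (k + 2) univ, f S ^ 2) *
              ∑ S ∈ powersetCard (k + 2) univ, eraseSum g S ^ 2 :=
            sum_mul_sq_le_sq_mul_sq _ _ _
        _ ≤ (∑ S ∈ powersetCard (k + 2) univ, f S ^ 2) *
              ((k + 1) * (Fintype.card α - (k + 2)) * q) :=
            mul_le_mul_of_nonneg_left hUg (sum_nonneg fun _ _ => sq_nonneg _)
        _ = A * q := by ring
    have hq : 0 ≤ q := sum_nonneg fun _ _ => sq_nonneg _
    nlinarith

def moves (S : Finset α) : Finset (Finset α) :=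
  (S ×ˢ Sᶜ).image fun p => insert p.2 (S.erase p.1)

theorem mem_moves {S S' : Finset α} :
    S' ∈ moves S ↔ ∃ j ∈ S, ∃ l ∉ S, insert l (S.erase j) = S' := by
  simp [moves, and_assoc]

theorem mem_moves_comm {S S' : Finset α} : S' ∈ moves S ↔ S ∈ moves S' := by
  suffices ∀ S S' : Finset α, S' ∈ moves S → S ∈ moves S' from ⟨this S S', this S' S⟩
  intro S S' h
  obtain ⟨j, hj, l, hl, rfl⟩ := mem_moves.1 h
  have hjl : j ≠ l := ne_of_mem_of_not_mem hj hl
  refine mem_moves.2 ⟨l, mem_insert_self _ _, j, by simp [hjl], ?_⟩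
  rw [erase_insert (fun h => hl (mem_of_mem_erase h)), insert_erase hj]

theorem notMem_moves_self (S : Finset α) : S ∉ moves S := by
  rw [mem_moves]
  rintro ⟨j, -, l, hl, h⟩
  exact hl (h ▸ mem_insert_self l _)

theorem moves_subset_powersetCard (S : Finset α) : moves S ⊆ powersetCard #S univ := by
  intro S' h
  obtain ⟨j, hj, l, hl, rfl⟩ := mem_moves.1 h
  rw [mem_powersetCard_univ, card_insert_of_notMem (fun h => hl (mem_of_mem_erase h)),
    card_erase_add_one hj]

theorem sum_moves (S : Finset α) (G : Finset α → ℝ) :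
    ∑ S' ∈ moves S, G S' = ∑ j ∈ S, ∑ l ∈ Sᶜ, G (insert l (S.erase j)) := by
  rw [moves, sum_image, sum_product]
  rintro ⟨j, l⟩ hp ⟨j', l'⟩ hp' h
  simp only [coe_product, Set.mem_prod, mem_coe, mem_compl] at hp hp' h
  have hl : l = l' := by
    have := h ▸ mem_insert_self l (S.erase j)
    rcases mem_insert.1 this with h' | h'
    · exact h'
    · exact absurd (mem_of_mem_erase h') hp.2
  subst hl
  have hj : j = j' := by
    by_contra hne
    have : j ∈ insert l (S.erase j') := mem_insert_of_mem (mem_erase.2 ⟨hne, hp.1⟩)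
    rw [← h] at this
    simp [ne_of_mem_of_not_mem hp.1 hp.2] at this
  rw [hj]

def moveEnergy (f : Finset α → ℝ) (S : Finset α) : ℝ :=
  ∑ S' ∈ moves S, (f S - f S') ^ 2

theorem sum_moveEnergy (k : ℕ) (f : Finset α → ℝ) :
    ∑ S ∈ powersetCard (k + 1) univ, moveEnergy f S =
      2 * (((Fintype.card α : ℝ) - k) * (k + 1) * ∑ S ∈ powersetCard (k + 1) univ, f S ^ 2 -
        ∑ T ∈ powersetCard k univ, insertSum f T ^ 2) := by
  have hlocal : ∀ T ∈ powersetCard k univ, ∑ j ∈ Tᶜ,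
      ∑ l ∈ (insert j T)ᶜ, (f (insert j T) - f (insert l ((insert j T).erase j))) ^ 2 =
        2 * (((Fintype.card α : ℝ) - k) * insertSum (fun S => f S ^ 2) T - insertSum f T ^ 2) := by
    intro T hT
    have hcard : (#Tᶜ : ℝ) = Fintype.card α - k := by
      rw [eq_sub_iff_add_eq, ← mem_powersetCard_univ.1 hT, ← Nat.cast_add, card_compl_add_card]
    rw [insertSum, insertSum, ← hcard, ← sum_sum_sub_sq]
    refine sum_congr rfl fun j hj => ?_
    rw [erase_insert (mem_compl.1 hj), compl_insert]
    exact sum_erase _ (by simp)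
  simp only [moveEnergy, sum_moves]
  rw [← sum_powersetCard_sum_compl_insert k
      fun S j => ∑ l ∈ Sᶜ, (f S - f (insert l (S.erase j))) ^ 2,
    sum_congr rfl hlocal, ← mul_sum, sum_sub_distrib, ← mul_sum, sum_insertSum]
  ring

theorem two_mul_card_mul_sum_sq_le_sum_moveEnergy {k : ℕ} (hk : k + 1 ≤ Fintype.card α)
    {f : Finset α → ℝ} (hf : ∑ S ∈ powersetCard (k + 1) univ, f S = 0) :
    2 * Fintype.card α * ∑ S ∈ powersetCard (k + 1) univ, f S ^ 2 ≤
      ∑ S ∈ powersetCard (k + 1) univ, moveEnergy f S := by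
  rw [sum_moveEnergy]
  nlinarith [sum_insertSum_sq_le hk hf]

end Slice

theorem filter_update_update_eq_true {α : Type*} [Fintype α] [DecidableEq α] (b : α → Bool)
    (j l : α) :
    univ.filter (Function.update (Function.update b j false) l true · = true) =
      insert l ((univ.filter (b · = true)).erase j) := by
  ext i
  by_cases hil : i = l <;> by_cases hij : i = j <;> simp [Function.update_apply, hil, hij]

theorem filter_eq_true_injective {α : Type*} [Fintype α] :
    Function.Injective fun b : α → Bool => univ.filter (b · = true) := by
  intro b b' h
  funext i
  have := congrArg (i ∈ ·) h
  simp only [mem_filter, mem_univ, true_and, eq_iff_iff] at this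
  exact Bool.eq_iff_iff.2 this

namespace ExclState
variable {n c : ℕ}

def occupied (z : ExclState n c) : Finset (Fin n) := univ.filter (z.1 · = true)

theorem occupied_injective : Function.Injective (occupied (n := n) (c := c)) :=
  fun _ _ h => Subtype.ext (filter_eq_true_injective h)

def equivPowersetCard : ExclState n c ≃ powersetCard c (univ : Finset (Fin n)) where
  toFun z := ⟨occupied z, mem_powersetCard_univ.2 z.2⟩
  invFun S := ⟨fun i => decide (i ∈ S.1), by simpa using mem_powersetCard_univ.1 S.2⟩
  left_inv z := occupied_injective (by ext; simp [occupied])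
  right_inv S := by ext; simp [occupied]

theorem sum_comp_occupied (F : Finset (Fin n) → ℝ) :
    ∑ z : ExclState n c, F (occupied z) = ∑ S ∈ powersetCard c univ, F S := by
  rw [← sum_coe_sort (powersetCard c univ)]
  exact Fintype.sum_equiv equivPowersetCard _ _ fun _ => rfl

theorem nontrivial (hc : 0 < c) (hcn : c < n) : Nontrivial (ExclState n c) := by
  obtain ⟨S, hS⟩ :=
    powersetCard_nonempty.2 (show c ≤ #(univ : Finset (Fin n)) by simpa using hcn.le)
  obtain ⟨j, hj⟩ := card_pos.1 ((mem_powersetCard_univ.1 hS).symm ▸ hc)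
  obtain ⟨l, hl⟩ : Sᶜ.Nonempty := by
    rw [← card_pos, card_compl, mem_powersetCard_univ.1 hS, Fintype.card_fin]
    omega
  have hmove : insert l (S.erase j) ∈ moves S := mem_moves.2 ⟨j, hj, l, mem_compl.1 hl, rfl⟩
  have hS' := (mem_powersetCard_univ.1 hS) ▸ moves_subset_powersetCard S hmove
  have hne : S ≠ insert l (S.erase j) := fun h => notMem_moves_self S (by rwa [← h] at hmove)
  have : Nontrivial (powersetCard c (univ : Finset (Fin n))) :=
    nontrivial_of_ne ⟨S, hS⟩ ⟨_, hS'⟩ (Subtype.coe_ne_coe.1 hne)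
  exact equivPowersetCard.nontrivial

theorem exclKernel_eq (z z' : ExclState n c) :
    exclKernel n c z z' =
      if occupied z' = occupied z then (c : ℝ) / n
      else if occupied z' ∈ moves (occupied z) then 1 / ((c : ℝ) * n) else 0 := by
  have hmove : (∃ j ℓ : Fin n, z.1 j = true ∧ z.1 ℓ = false ∧
      z'.1 = Function.update (Function.update z.1 j false) ℓ true) ↔
        occupied z' ∈ moves (occupied z) := by
    simp only [mem_moves, occupied, mem_filter, mem_univ, true_and, Bool.not_eq_true,
      ← filter_update_update_eq_true]
    constructor
    · rintro ⟨j, l, hj, hl, h⟩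
      exact ⟨j, hj, l, hl, by rw [h]⟩
    · rintro ⟨j, hj, l, hl, h⟩
      exact ⟨j, l, hj, hl, (filter_eq_true_injective h).symm⟩
  simp only [exclKernel, occupied_injective.eq_iff, hmove]

theorem card_occupied (z : ExclState n c) : #(occupied z) = c := z.2

theorem card_eq_choose : Fintype.card (ExclState n c) = n.choose c := by
  rw [Fintype.card_congr equivPowersetCard, Fintype.card_coe, card_powersetCard, card_univ,
    Fintype.card_fin]

theorem exclKernel_comm (z z' : ExclState n c) : exclKernel n c z z' = exclKernel n c z' z := by
  simp only [exclKernel_eq, @eq_comm _ (occupied z'), mem_moves_comm]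

theorem sum_exclKernel_mul_sq {f : ExclState n c → ℝ} {F : Finset (Fin n) → ℝ}
    (hF : ∀ z, f z = F (occupied z)) (z : ExclState n c) :
    ∑ z', exclKernel n c z z' * (f z - f z') ^ 2 = moveEnergy F (occupied z) / (c * n) := by
  set S := occupied z
  have hterm : ∀ S' ∈ powersetCard c univ,
      (if S' = S then (c : ℝ) / n else if S' ∈ moves S then 1 / ((c : ℝ) * n) else 0) *
        (F S - F S') ^ 2 = if S' ∈ moves S then (F S - F S') ^ 2 / (c * n) else 0 := by
    intro S' _
    split_ifs with h₁ h₂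
    · simp [h₁, notMem_moves_self] at h₂
    · simp [h₁]
    · ring
    · ring
  calc ∑ z', exclKernel n c z z' * (f z - f z') ^ 2
      = ∑ S' ∈ powersetCard c univ,
          (if S' = S then (c : ℝ) / n else if S' ∈ moves S then 1 / ((c : ℝ) * n) else 0) *
            (F S - F S') ^ 2 := by
        rw [← sum_comp_occupied]
        simp only [exclKernel_eq, hF, S]
    _ = moveEnergy F S / (c * n) := by
        rw [sum_congr rfl hterm, sum_ite_mem, moveEnergy, sum_div,
          inter_eq_right.2 (card_occupied z ▸ moves_subset_powersetCard S)]

theorem dirichletForm_exclKernel {f : ExclState n c → ℝ} {F : Finset (Fin n) → ℝ}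
    (hF : ∀ z, f z = F (occupied z)) :
    dirichletForm (fun _ : ExclState n c => 1 / (Fintype.card (ExclState n c) : ℝ))
        (exclKernel n c) f =
      (∑ S ∈ powersetCard c univ, moveEnergy F S) / (2 * n.choose c * c * n) := by
  simp only [dirichletForm, mul_assoc, ← mul_sum, sum_exclKernel_mul_sq hF, ← sum_div,
    sum_comp_occupied (moveEnergy F), card_eq_choose]
  ring

theorem inv_mul_distVar_le_dirichletForm (hc : 0 < c) (hcn : c ≤ n) (f : ExclState n c → ℝ) :
    1 / (c : ℝ) * distVar (fun _ : ExclState n c => 1 / (Fintype.card (ExclState n c) : ℝ)) f ≤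
      dirichletForm (fun _ : ExclState n c => 1 / (Fintype.card (ExclState n c) : ℝ))
        (exclKernel n c) f := by
  have hN : (0 : ℝ) < n.choose c := by exact_mod_cast Nat.choose_pos hcn
  have hn : (0 : ℝ) < n := by exact_mod_cast hc.trans_le hcn
  apply mul_distVar_le_of_distMean_eq_zero
  · simp [card_eq_choose, hN.ne']
  intro g hg
  obtain ⟨k, rfl⟩ : ∃ k, c = k + 1 := ⟨c - 1, by omega⟩
  set G := Function.extend occupied g 0
  have hG : ∀ z, g z = G (occupied z) := fun z => (occupied_injective.extend_apply g 0 z).symm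
  have hGmean : ∑ S ∈ powersetCard (k + 1) univ, G S = 0 := by
    simp only [distMean, ← mul_sum, mul_eq_zero, one_div, inv_eq_zero, card_eq_choose,
      hN.ne', false_or, hG, sum_comp_occupied G] at hg
    exact hg
  have hpoincare := two_mul_card_mul_sum_sq_le_sum_moveEnergy (α := Fin n) (by simpa using hcn)
    hGmean
  rw [Fintype.card_fin] at hpoincare
  rw [dirichletForm_exclKernel hG, ← mul_sum]
  simp only [hG, sum_comp_occupied (G · ^ 2), card_eq_choose]
  rw [le_div_iff₀ (by positivity)]
  calc _ = 2 * n * ∑ S ∈ powersetCard (k + 1) univ, G S ^ 2 := by field_simp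
    _ ≤ _ := hpoincare

end ExclState

theorem exclusion_gap_ge_general (n c : ℕ) (hc : 1 ≤ c) (hcn : c < n) :
    IsReversible (fun _ : ExclState n c => 1 / (Fintype.card (ExclState n c) : ℝ))
        (exclKernel n c) ∧
      1 / (c : ℝ) ≤
        spectralGap (fun _ : ExclState n c => 1 / (Fintype.card (ExclState n c) : ℝ))
          (exclKernel n c) := by
  have := ExclState.nontrivial hc hcn
  refine ⟨fun z z' => by rw [ExclState.exclKernel_comm], le_spectralGap (fun _ => by positivity)
    (ExclState.inv_mul_distVar_le_dirichletForm hc hcn.le)⟩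

/-- The exclusion process with `c` particles on the complete
graph on `n` vertices is reversible with respect to the uniform distribution
and has spectral gap at least `1/c`. -/
theorem exclusion_gap_ge (n c : ℕ) (hn : 2 ≤ n) (hc : 1 ≤ c) (hcn : c < n) :
    IsReversible (fun _ : ExclState n c => 1 / (Fintype.card (ExclState n c) : ℝ))
        (exclKernel n c) ∧
      1 / (c : ℝ) ≤
        spectralGap (fun _ : ExclState n c => 1 / (Fintype.card (ExclState n c) : ℝ))
          (exclKernel n c) :=
  exclusion_gap_ge_general n c hc hcn
end

section
/- Let η be a continuous real-valued function on a compact metric space Θ that is multimodal, witnessed by points θ⁽¹⁾, θ⁽²⁾ and disjoint bounded sets F₁, F₂ with sup_{∂F_j} η < η(θ⁽ʲ⁾). Then for any ξ with min_j sup_{∂F_j} η < ξ < min_j η(θ⁽ʲ⁾) and with ξ > sup_{∂F₁} η, the sets B̃₁ = F₁ ∩ {η ≥ ξ} and B̃₂ = {η ≥ ξ} \ F₁ are nonempty and separated by a positive Euclidean distance ε > 0. -/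
open Bornology

theorem IsCompact.sep_le_of_continuousOn {X α : Type*} [TopologicalSpace X] [T2Space X]
    [TopologicalSpace α] [Preorder α] [ClosedIciTopology α] {s : Set X} {f : X → α} (hs : IsCompact s)
    (hf : ContinuousOn f s) (c : α) : IsCompact {x ∈ s | c ≤ f x} :=
  hs.of_isClosed_subset (hf.preimage_isClosed_of_isClosed hs.isClosed isClosed_Ici)
    (Set.sep_subset _ _)

/-- The compact set `closure A ∩ S` and the closed set `closure Aᶜ ∩ S` can only meet in
`frontier A`, so they are disjoint and hence at positive distance. -/
theorem exists_pos_le_dist_of_disjoint_frontier {X : Type*} [MetricSpace X] {S A : Set X}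
    (hS : IsCompact S) (hA : Disjoint (frontier A) S) :
    ∃ ε > 0, ∀ x ∈ A ∩ S, ∀ y ∈ S \ A, ε ≤ dist x y := by
  have hK : IsCompact (closure A ∩ S) :=
    hS.of_isClosed_subset (isClosed_closure.inter hS.isClosed) Set.inter_subset_right
  have hdisj : Disjoint (closure A ∩ S) (closure Aᶜ ∩ S) := by
    rw [Set.disjoint_left]
    rintro x ⟨hxA, hxS⟩ ⟨hxAc, -⟩
    have hx : x ∈ frontier A := by rw [frontier_eq_closure_inter_closure]; exact ⟨hxA, hxAc⟩
    exact Set.disjoint_left.mp hA hx hxS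
  have hK' : IsClosed (closure Aᶜ ∩ S) := isClosed_closure.inter hS.isClosed
  obtain ⟨r, hr, hsep⟩ := Metric.exists_pos_forall_lt_edist hK hK' hdisj
  refine ⟨r, hr, fun x ⟨hxA, hxS⟩ y ⟨hyS, hyA⟩ => ?_⟩
  have := hsep x ⟨subset_closure hxA, hxS⟩ y ⟨subset_closure hyA, hyS⟩
  rw [edist_dist, ← ENNReal.ofReal_coe_nnreal] at this
  exact ((ENNReal.ofReal_lt_ofReal_iff_of_nonneg r.2).mp this).le

theorem multimodal_separated_sets_general {d : ℕ}
    (Θ : Set (EuclideanSpace ℝ (Fin d))) (hΘ : IsCompact Θ)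
    (η : EuclideanSpace ℝ (Fin d) → ℝ) (hη : ContinuousOn η Θ)
    (θ1 θ2 : EuclideanSpace ℝ (Fin d)) (F1 F2 : Set (EuclideanSpace ℝ (Fin d)))
    (hF1 : F1 ⊆ Θ) (hF2 : F2 ⊆ Θ)
    (hθ1 : θ1 ∈ F1) (hθ2 : θ2 ∈ F2) (hdisj : F1 ∩ F2 = ∅)
    (m1 : ℝ)
    (hm1 : ∀ x ∈ frontier F1, η x ≤ m1)
    (ξ : ℝ) (hξ1 : m1 < ξ) (hξ2 : ξ < η θ1) (hξ3 : ξ < η θ2) :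
    (F1 ∩ {θ ∈ Θ | ξ ≤ η θ}).Nonempty ∧
      ({θ ∈ Θ | ξ ≤ η θ} \ F1).Nonempty ∧
      ∃ ε > 0, ∀ x ∈ F1 ∩ {θ ∈ Θ | ξ ≤ η θ},
        ∀ y ∈ {θ ∈ Θ | ξ ≤ η θ} \ F1, ε ≤ dist x y := by
  have hθ2F1 : θ2 ∉ F1 := fun h => Set.eq_empty_iff_forall_notMem.mp hdisj θ2 ⟨h, hθ2⟩
  have hfrontier : Disjoint (frontier F1) {θ ∈ Θ | ξ ≤ η θ} :=
    Set.disjoint_left.mpr fun x hx hxS => ((hm1 x hx).trans_lt hξ1).not_ge hxS.2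
  exact ⟨⟨θ1, hθ1, hF1 hθ1, hξ2.le⟩, ⟨θ2, ⟨hF2 hθ2, hξ3.le⟩, hθ2F1⟩,
    exists_pos_le_dist_of_disjoint_frontier (hΘ.sep_le_of_continuousOn hη ξ) hfrontier⟩

/-- Let `η` be continuous on a compact `Θ ⊆ ℝ^d` and
multimodal, witnessed by `θ⁽¹⁾ ∈ F₁`, `θ⁽²⁾ ∈ F₂` with `F₁ ∩ F₂ = ∅` and
`sup_{∂F_j} η < η(θ⁽ʲ⁾)`. Then for any `ξ` with
`sup_{∂F₁} η < ξ < min_j η(θ⁽ʲ⁾)`, the sets `B̃₁ = F₁ ∩ {η ≥ ξ}` and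
`B̃₂ = {η ≥ ξ} \ F₁` (within `Θ`) are nonempty and separated by some
Euclidean distance `ε > 0`. -/
theorem multimodal_separated_sets {d : ℕ}
    (Θ : Set (EuclideanSpace ℝ (Fin d))) (hΘ : IsCompact Θ)
    (η : EuclideanSpace ℝ (Fin d) → ℝ) (hη : ContinuousOn η Θ)
    (θ1 θ2 : EuclideanSpace ℝ (Fin d)) (F1 F2 : Set (EuclideanSpace ℝ (Fin d)))
    (hF1 : F1 ⊆ Θ) (hF2 : F2 ⊆ Θ)
    (hb1 : IsBounded F1) (hb2 : IsBounded F2)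
    (hθ1 : θ1 ∈ F1) (hθ2 : θ2 ∈ F2) (hdisj : F1 ∩ F2 = ∅)
    (m1 m2 : ℝ)
    (hm1 : ∀ x ∈ frontier F1, η x ≤ m1) (hm1' : m1 < η θ1)
    (hm2 : ∀ x ∈ frontier F2, η x ≤ m2) (hm2' : m2 < η θ2)
    (ξ : ℝ) (hξ1 : m1 < ξ) (hξ2 : ξ < η θ1) (hξ3 : ξ < η θ2) :
    (F1 ∩ {θ ∈ Θ | ξ ≤ η θ}).Nonempty ∧
      ({θ ∈ Θ | ξ ≤ η θ} \ F1).Nonempty ∧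
      ∃ ε > 0, ∀ x ∈ F1 ∩ {θ ∈ Θ | ξ ≤ η θ},
        ∀ y ∈ {θ ∈ Θ | ξ ≤ η θ} \ F1, ε ≤ dist x y :=
  multimodal_separated_sets_general Θ hΘ η hη θ1 θ2 F1 F2 hF1 hF2 hθ1 hθ2 hdisj m1 hm1 ξ hξ1 hξ2 hξ3
end
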